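/- arXiv:1402.4316 — 4 statements merged into one kernel-verified Lean document; each statement's English description precedes it below -/
import Mathlib

section
/- For any 0 < z < 1, the distribution function F(-z,x) defined by F(-z,x) = exp(-(1-zx)^{1/z}) for x < 1/z and F(-z,x) = 1 for x ≥ 1/z satisfies sup_{x ∈ ℝ} |F(-z,x) - Λ(x)| ≤ z/e, where Λ(x) = exp(-exp(-x)). -/
open Real

/-- The standard Gumbel distribution function. -/
noncomputable def Gumbel (x : ℝ) : ℝ := Real.exp (-Real.exp (-x))

/-- The reverse-Weibull-type generalized extreme value distribution function
with parameter `-z`, `z > 0`. -/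
noncomputable def GEVneg (z x : ℝ) : ℝ :=
  if x < 1 / z then Real.exp (-(1 - z * x) ^ (1 / z)) else 1

/-!
With `p = 1 / z` and `v = 1 - z x` we have `F(-z, x) = exp (-v ^ p)` and
`Λ(x) = exp (-exp (p (v - 1)))`, and `v ^ p ≤ exp (p (v - 1))` makes the difference nonnegative.
For `v ≤ 1` it is at most `exp (p (v - 1)) - v ^ p`; for `1 ≤ v ≤ e` we study it in the variable
`log v`. In both cases the maximum over the compact range sits at an endpoint or at a critical
point, where the critical-point equation turns the value into a bound of the form
`t exp (-t) / p ≤ 1 / (e p)`. The tails `v ≥ e` and `x ≥ 1 / z` are at most `exp (-exp p)` and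
`exp (-p)`, both `≤ 1 / (e p)`.
-/

open Set

theorem le_of_endpoints_of_critical_points {f f' : ℝ → ℝ} {a b M : ℝ} (hab : a ≤ b)
    (hf : ContinuousOn f (Icc a b)) (hf' : ∀ x ∈ Ioo a b, HasDerivAt f (f' x) x)
    (ha : f a ≤ M) (hb : f b ≤ M) (hcrit : ∀ x ∈ Ioo a b, f' x = 0 → f x ≤ M) :
    ∀ x ∈ Icc a b, f x ≤ M := by
  obtain ⟨c, hc, hmax⟩ := isCompact_Icc.exists_isMaxOn (nonempty_Icc.2 hab) hf
  intro x hx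
  refine (hmax hx).trans ?_
  rcases hc.1.eq_or_lt with rfl | hac
  · exact ha
  rcases hc.2.eq_or_lt with rfl | hcb
  · exact hb
  exact hcrit c ⟨hac, hcb⟩
    ((hmax.isLocalMax (Icc_mem_nhds hac hcb)).hasDerivAt_eq_zero (hf' c ⟨hac, hcb⟩))

theorem exp_neg_sub_exp_neg_le_mul (a b : ℝ) : exp (-a) - exp (-b) ≤ exp (-a) * (b - a) := by
  have hb : exp (-b) = exp (-a) * exp (-(b - a)) := by rw [← exp_add]; ring_nf
  nlinarith [add_one_le_exp (-(b - a)), exp_pos (-a)]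

theorem rpow_le_exp_mul_sub_one {p v : ℝ} (hp : 0 ≤ p) (hv : 0 ≤ v) :
    v ^ p ≤ exp (p * (v - 1)) := by
  rw [mul_comm, exp_mul]
  exact rpow_le_rpow hv (by linarith [add_one_le_exp (v - 1)]) hp

theorem exp_neg_le_exp_neg_one_div {p : ℝ} (hp : 0 < p) : exp (-p) ≤ exp (-1) / p := by
  rw [le_div_iff₀' hp]
  exact mul_exp_neg_le_exp_neg_one p

theorem exp_neg_exp_le_exp_neg_one_div {p : ℝ} (hp : 0 < p) :
    exp (-exp p) ≤ exp (-1) / p := by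
  rw [le_div_iff₀' hp]
  calc p * exp (-exp p) ≤ exp p * exp (-exp p) := by
        gcongr; linarith [add_one_le_exp p]
    _ ≤ exp (-1) := mul_exp_neg_le_exp_neg_one _

theorem exp_mul_sub_one_sub_rpow_le {p v : ℝ} (hp : 0 < p) (hv : v ∈ Icc (0 : ℝ) 1) :
    exp (p * (v - 1)) - v ^ p ≤ exp (-1) / p := by
  refine le_of_endpoints_of_critical_points (f := fun w ↦ exp (p * (w - 1)) - w ^ p)
    (f' := fun w ↦ exp (p * (w - 1)) * (p * 1) - p * w ^ (p - 1)) zero_le_one ?_ ?_ ?_ ?_ ?_ v hv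
  · have := continuous_rpow_const hp.le
    fun_prop
  · intro w hw
    exact (((hasDerivAt_id' w).sub_const 1).const_mul p).exp.sub
      (hasDerivAt_rpow_const (Or.inl hw.1.ne'))
  · simpa [zero_rpow hp.ne'] using exp_neg_le_exp_neg_one_div hp
  · simp only [sub_self, mul_zero, exp_zero, one_rpow]
    positivity
  · intro c hc hcrit
    have hcrit' : exp (p * (c - 1)) = c ^ (p - 1) := mul_left_cancel₀ hp.ne' (by linarith)
    have hcp : c ^ p = c ^ (p - 1) * c := by
      rw [← rpow_add_one hc.1.ne']; ring_nf
    rw [le_div_iff₀' hp]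
    calc p * (exp (p * (c - 1)) - c ^ p) = p * (1 - c) * exp (-(p * (1 - c))) := by
          rw [hcp, ← hcrit']; ring_nf
      _ ≤ exp (-1) := mul_exp_neg_le_exp_neg_one _

theorem sq_add_le_exp_exp_sub_one {s : ℝ} (hs : 0 ≤ s) : s ^ 2 + s ≤ exp (exp s - 1) := by
  have hy : s + s ^ 2 / 2 ≤ exp s - 1 := by linarith [quadratic_le_exp_of_nonneg hs]
  nlinarith [quadratic_le_exp_of_nonneg (by nlinarith : 0 ≤ exp s - 1)]

theorem mul_sub_le_exp_exp_mul_sub_one {p l : ℝ} (hp : 0 ≤ p) (hl : l ∈ Icc (0 : ℝ) 1) :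
    p * (p * (exp l - 1) - (p - 1) * l) ≤ exp (exp (p * l) - 1) := by
  have hquad : exp l - 1 - l ≤ l ^ 2 :=
    (le_abs_self _).trans (abs_exp_sub_one_sub_id_le (abs_le.2 ⟨by linarith [hl.1], hl.2⟩))
  calc p * (p * (exp l - 1) - (p - 1) * l) = p ^ 2 * (exp l - 1 - l) + p * l := by ring
    _ ≤ p ^ 2 * l ^ 2 + p * l := by gcongr
    _ = (p * l) ^ 2 + p * l := by ring
    _ ≤ _ := sq_add_le_exp_exp_sub_one (mul_nonneg hp hl.1)

theorem exp_neg_exp_mul_sub_exp_neg_exp_le {p l : ℝ} (hp : 0 < p) (hl : l ∈ Icc (0 : ℝ) 1) :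
    exp (-exp (p * l)) - exp (-exp (p * (exp l - 1))) ≤ exp (-1) / p := by
  refine le_of_endpoints_of_critical_points
    (f := fun w ↦ exp (-exp (p * w)) - exp (-exp (p * (exp w - 1))))
    (f' := fun w ↦ exp (-exp (p * w)) * -(exp (p * w) * (p * 1))
      - exp (-exp (p * (exp w - 1))) * -(exp (p * (exp w - 1)) * (p * exp w)))
    zero_le_one (by fun_prop) ?_ ?_ ?_ ?_ l hl
  · intro w _
    exact (((hasDerivAt_id' w).const_mul p).exp.neg.exp).sub
      (((hasDerivAt_exp w).sub_const 1).const_mul p).exp.neg.exp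
  · simp only [mul_zero, exp_zero, sub_self]
    positivity
  · simp only [mul_one]
    linarith [exp_pos (-exp (p * (exp 1 - 1))), exp_neg_exp_le_exp_neg_one_div hp]
  · intro w hw hcrit
    set A := exp (p * w)
    set B := exp (p * (exp w - 1))
    have hgap : B - A = p * (exp w - 1) - (p - 1) * w := by
      -- the critical-point equation `A exp (-A) = B exp w exp (-B)`, read in logarithms
      have h : exp (p * w + -A) = exp (p * (exp w - 1) + w + -B) := by
        rw [exp_add, exp_add, exp_add]
        exact mul_right_cancel₀ hp.ne' (by linarith)
      linarith [exp_injective h]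
    rw [le_div_iff₀' hp]
    calc p * (exp (-A) - exp (-B)) ≤ exp (-A) * (p * (B - A)) := by
          rw [mul_left_comm]
          exact mul_le_mul_of_nonneg_left (exp_neg_sub_exp_neg_le_mul A B) hp.le
      _ ≤ exp (-A) * exp (A - 1) := by
          rw [hgap]
          gcongr
          exact mul_sub_le_exp_exp_mul_sub_one hp.le ⟨hw.1.le, hw.2.le⟩
      _ = exp (-1) := by rw [← exp_add]; ring_nf

theorem abs_exp_neg_rpow_sub_exp_neg_exp_le {p v : ℝ} (hp : 0 < p) (hv : 0 ≤ v) :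
    |exp (-v ^ p) - exp (-exp (p * (v - 1)))| ≤ exp (-1) / p := by
  have hle : v ^ p ≤ exp (p * (v - 1)) := rpow_le_exp_mul_sub_one hp.le hv
  rw [abs_of_nonneg (sub_nonneg.2 (exp_le_exp.2 (neg_le_neg hle)))]
  rcases le_total v 1 with hv1 | hv1
  · calc _ ≤ exp (-v ^ p) * (exp (p * (v - 1)) - v ^ p) := exp_neg_sub_exp_neg_le_mul _ _
      _ ≤ exp (p * (v - 1)) - v ^ p := mul_le_of_le_one_left (sub_nonneg.2 hle)
          (exp_le_one_iff.2 (neg_nonpos.2 (rpow_nonneg hv p)))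
      _ ≤ _ := exp_mul_sub_one_sub_rpow_le hp ⟨hv, hv1⟩
  rcases le_total v (exp 1) with hve | hve
  · have hv0 : 0 < v := by linarith
    have hl : log v ∈ Icc (0 : ℝ) 1 :=
      ⟨log_nonneg hv1, by simpa using log_le_log hv0 hve⟩
    have hpow : v ^ p = exp (p * log v) := by rw [rpow_def_of_pos hv0, mul_comm]
    simpa [hpow, exp_log hv0] using exp_neg_exp_mul_sub_exp_neg_exp_le hp hl
  · calc _ ≤ exp (-v ^ p) := sub_le_self _ (exp_pos _).le
      _ ≤ exp (-exp p) := by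
          rw [← exp_one_rpow p]
          exact exp_le_exp.2 (neg_le_neg (rpow_le_rpow (exp_pos 1).le hve hp.le))
      _ ≤ _ := exp_neg_exp_le_exp_neg_one_div hp

theorem stmt1_general (z : ℝ) (hz0 : 0 < z) :
    ∀ x : ℝ, |GEVneg z x - Gumbel x| ≤ z / Real.exp 1 := by
  intro x
  have hp : 0 < 1 / z := one_div_pos.2 hz0
  rw [show z / exp 1 = exp (-1) / (1 / z) by rw [exp_neg]; field_simp]
  unfold GEVneg Gumbel
  split_ifs with hx
  · have hv : 0 ≤ 1 - z * x := sub_nonneg.2 ((lt_div_iff₀' hz0).1 hx).le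
    have hexp : 1 / z * (1 - z * x - 1) = -x := by field_simp; ring
    rw [← hexp]
    exact abs_exp_neg_rpow_sub_exp_neg_exp_le hp hv
  · have hlow : 1 - exp (-x) ≤ exp (-exp (-x)) := by linarith [add_one_le_exp (-exp (-x))]
    have htail : exp (-x) ≤ exp (-(1 / z)) := exp_le_exp.2 (by linarith [not_lt.1 hx])
    rw [abs_of_nonneg (sub_nonneg.2 (exp_le_one_iff.2 (neg_nonpos.2 (exp_pos _).le)))]
    linarith [exp_neg_le_exp_neg_one_div hp]

theorem stmt1 (z : ℝ) (hz0 : 0 < z) (hz1 : z < 1) :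
    ∀ x : ℝ, |GEVneg z x - Gumbel x| ≤ z / Real.exp 1 :=
  stmt1_general z hz0
end

section
/- Let u be a differentiable positive function, let h be a nonincreasing positive function with |u′(t)| ≤ h(t) for all t, let a_n = u(b_n) > 0, and fix x > 0 with h(b_n)x < 1. Then 1/(1 + h(b_n)x) ≤ u(b_n)/u(a_n x + b_n) ≤ 1/(1 - h(b_n)x). -/
theorem div_mem_Icc_of_abs_sub_le_mul {a v k : ℝ} (ha : 0 < a) (hv : 0 < v) (hk : k < 1)
    (hva : |v - a| ≤ k * a) :
    1 / (1 + k) ≤ a / v ∧ a / v ≤ 1 / (1 - k) := by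
  obtain ⟨hlower, hupper⟩ := abs_le.1 hva
  have hk₀ : 0 ≤ k := nonneg_of_mul_nonneg_left ((abs_nonneg _).trans hva) ha
  constructor
  · rw [div_le_div_iff₀ (by linarith) hv]
    linarith
  · rw [div_le_div_iff₀ hv (by linarith)]
    linarith

theorem abs_sub_le_of_abs_deriv_le_antitone {u h : ℝ → ℝ} {b c : ℝ} (hu : Differentiable ℝ u)
    (hh : Antitone h) (hbound : ∀ t, |deriv u t| ≤ h t) (hbc : b ≤ c) :
    |u c - u b| ≤ h b * (c - b) := by
  have := (convex_Icc b c).norm_image_sub_le_of_norm_deriv_le (fun t _ => hu t)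
    (fun t ht => (hbound t).trans (hh ht.1)) (Set.left_mem_Icc.2 hbc) (Set.right_mem_Icc.2 hbc)
  rwa [Real.norm_eq_abs, Real.norm_of_nonneg (sub_nonneg.2 hbc)] at this

theorem stmt3_general (u h : ℝ → ℝ) (b x : ℝ)
    (hu : Differentiable ℝ u) (hupos : ∀ t, 0 < u t)
    (hhmono : Antitone h)
    (hbound : ∀ t, |deriv u t| ≤ h t)
    (hx : 0 < x) (hsmall : h b * x < 1) :
    1 / (1 + h b * x) ≤ u b / u (u b * x + b) ∧
      u b / u (u b * x + b) ≤ 1 / (1 - h b * x) := by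
  have hstep : 0 ≤ u b * x := (mul_pos (hupos b) hx).le
  have hlip := abs_sub_le_of_abs_deriv_le_antitone hu hhmono hbound
    (le_add_of_nonneg_left hstep : b ≤ u b * x + b)
  rw [add_sub_cancel_right, ← mul_assoc, mul_right_comm] at hlip
  exact div_mem_Icc_of_abs_sub_le_mul (hupos b) (hupos _) hsmall hlip

theorem stmt3 (u h : ℝ → ℝ) (b x : ℝ)
    (hu : Differentiable ℝ u) (hupos : ∀ t, 0 < u t)
    (hhpos : ∀ t, 0 < h t) (hhmono : Antitone h)
    (hbound : ∀ t, |deriv u t| ≤ h t)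
    (hx : 0 < x) (hsmall : h b * x < 1) :
    1 / (1 + h b * x) ≤ u b / u (u b * x + b) ∧
      u b / u (u b * x + b) ≤ 1 / (1 - h b * x) :=
  stmt3_general u h b x hu hupos hhmono hbound hx hsmall
end

section
/- Let u be a differentiable positive function, h positive and nonincreasing with |u′(t)| ≤ h(t), a_n = u(b_n) > 0, and let x < 0 satisfy h(a_n x + b_n)|x| < 1. Then 1/(1 + h(a_n x + b_n)|x|) ≤ u(b_n)/u(a_n x + b_n) ≤ 1/(1 - h(a_n x + b_n)|x|). -/
-- Since `h` is antitone, `h y` bounds `|u'|` on the whole segment `[y, b]`.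
lemma abs_sub_le_mul_of_abs_deriv_le_antitone {u h : ℝ → ℝ} (hu : Differentiable ℝ u)
    (hh : Antitone h) (hbound : ∀ t, |deriv u t| ≤ h t) {y b : ℝ} (hyb : y ≤ b) :
    |u b - u y| ≤ h y * (b - y) := by
  simpa using norm_image_sub_le_of_norm_deriv_le_segment' (f := u) (f' := deriv u)
    (fun t _ => (hu t).hasDerivAt.hasDerivWithinAt)
    (fun t ht => (hbound t).trans (hh ht.1)) b (Set.right_mem_Icc.2 hyb)

lemma one_div_one_add_le_div_le_one_div_one_sub {p q c : ℝ} (hq : 0 < q)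
    (hc₀ : 0 ≤ c) (hc₁ : c < 1) (hpq : |p - q| ≤ c * p) :
    1 / (1 + c) ≤ p / q ∧ p / q ≤ 1 / (1 - c) := by
  obtain ⟨hlower, hupper⟩ := abs_le.1 hpq
  constructor
  · rw [div_le_div_iff₀ (by linarith) hq]
    linarith
  · rw [div_le_div_iff₀ hq (by linarith)]
    linarith

theorem stmt4_general (u h : ℝ → ℝ) (b x : ℝ)
    (hu : Differentiable ℝ u) (hupos : ∀ t, 0 < u t)
    (hhmono : Antitone h)
    (hbound : ∀ t, |deriv u t| ≤ h t)
    (hx : x < 0) (hsmall : h (u b * x + b) * |x| < 1) :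
    1 / (1 + h (u b * x + b) * |x|) ≤ u b / u (u b * x + b) ∧
      u b / u (u b * x + b) ≤ 1 / (1 - h (u b * x + b) * |x|) := by
  set y := u b * x + b
  have hgap : b - y = |x| * u b := by
    rw [abs_of_neg hx]
    ring
  have hyb : y ≤ b := by
    linarith [mul_nonneg (abs_nonneg x) (hupos b).le]
  have hmvt : |u b - u y| ≤ h y * |x| * u b := by
    simpa only [hgap, mul_assoc] using
      abs_sub_le_mul_of_abs_deriv_le_antitone hu hhmono hbound hyb
  have hc₀ : 0 ≤ h y * |x| := mul_nonneg ((abs_nonneg _).trans (hbound y)) (abs_nonneg x)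
  exact one_div_one_add_le_div_le_one_div_one_sub (hupos y) hc₀ hsmall hmvt

theorem stmt4 (u h : ℝ → ℝ) (b x : ℝ)
    (hu : Differentiable ℝ u) (hupos : ∀ t, 0 < u t)
    (hhpos : ∀ t, 0 < h t) (hhmono : Antitone h)
    (hbound : ∀ t, |deriv u t| ≤ h t)
    (hx : x < 0) (hsmall : h (u b * x + b) * |x| < 1) :
    1 / (1 + h (u b * x + b) * |x|) ≤ u b / u (u b * x + b) ∧
      u b / u (u b * x + b) ≤ 1 / (1 - h (u b * x + b) * |x|) :=
  stmt4_general u h b x hu hupos hhmono hbound hx hsmall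
end

section
/- Suppose g_n → λ uniformly on ℝ, where λ is the Gumbel density, and suppose ∫|g_n − λ|^{β−1} ≤ M for all large n and some β > 1, M > 0. Then H_β(g_n) → H_β(λ), and moreover |H_β(g_n) − H_β(λ)| = O(sup_x |g_n(x) − λ(x)|). -/
open Real MeasureTheory Filter

/-- The Rényi entropy of order `β` of a density `f` on `ℝ`. -/
noncomputable def renyiEntropy (β : ℝ) (f : ℝ → ℝ) : ℝ :=
  (1 / (1 - β)) * Real.log (∫ x : ℝ, f x ^ β)

/-- The standard Gumbel density. -/
noncomputable def gumbelPDF (x : ℝ) : ℝ := Real.exp (-x - Real.exp (-x))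

/-!
Write `J f = ∫ f ^ β` and `ε = sup |g - λ|`. The Rényi entropy is `(1 - β)⁻¹ log J`, and `log` is
Lipschitz near `J λ > 0`, so it suffices to show `J g - J λ = O(ε)`. The mean value theorem gives
`|g ^ β - λ ^ β| ≲ ε λ ^ (β - 1) + ε ^ (β - 1) |g - λ|` pointwise, and the first term integrates
to `O(ε)`. The mass of `|g - λ|` may spread far out where `λ` is tiny, but both functions are
probability densities, so `∫ |g - λ| = 2 ∫ (λ - g)⁺ ≤ 2 ∫ min λ ε ≤ 2 ε ^ (1 - s) ∫ λ ^ s`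
(Scheffé). With `s = min 1 (β - 1)` the factor `ε ^ (β - 1)` makes the second term `O(ε)` too.
-/

open Set Topology Asymptotics

namespace Real

lemma abs_rpow_sub_rpow_le_of_le {p M a b : ℝ} (hp : 1 ≤ p) (ha : 0 ≤ a) (hb : 0 ≤ b)
    (haM : a ≤ M) (hbM : b ≤ M) : |a ^ p - b ^ p| ≤ p * M ^ (p - 1) * |a - b| := by
  have hderiv : ∀ x ∈ Icc 0 M, HasDerivAt (fun y : ℝ => y ^ p) (p * x ^ (p - 1)) x :=
    fun x _ => hasDerivAt_rpow_const (Or.inr hp)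
  refine (convex_Icc 0 M).norm_image_sub_le_of_norm_deriv_le
    (fun x hx => (hderiv x hx).differentiableAt) (fun x hx => ?_) ⟨hb, hbM⟩ ⟨ha, haM⟩
  rw [(hderiv x hx).deriv, norm_mul, norm_of_nonneg (by linarith),
    norm_of_nonneg (rpow_nonneg hx.1 _)]
  gcongr
  exacts [hx.1, hx.2]

lemma add_rpow_le_two_rpow_mul_add_rpow {q a b : ℝ} (hq : 0 ≤ q) (ha : 0 ≤ a) (hb : 0 ≤ b) :
    (a + b) ^ q ≤ 2 ^ q * (a ^ q + b ^ q) := by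
  have hmax : max a b ^ q ≤ a ^ q + b ^ q := by
    rcases max_choice a b with h | h <;> rw [h] <;>
      linarith [rpow_nonneg ha q, rpow_nonneg hb q]
  calc (a + b) ^ q ≤ (2 * max a b) ^ q := by
        gcongr; linarith [le_max_left a b, le_max_right a b]
    _ = 2 ^ q * max a b ^ q := mul_rpow zero_le_two (le_max_of_le_left ha)
    _ ≤ 2 ^ q * (a ^ q + b ^ q) := by gcongr

lemma min_le_rpow_mul_rpow {a b s : ℝ} (ha : 0 ≤ a) (hb : 0 ≤ b) (hs0 : 0 ≤ s) (hs1 : s ≤ 1) :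
    min a b ≤ a ^ s * b ^ (1 - s) := by
  have hm : 0 ≤ min a b := le_min ha hb
  calc min a b = min a b ^ s * min a b ^ (1 - s) := by
        rw [← rpow_add' hm (by norm_num), add_sub_cancel, rpow_one]
    _ ≤ a ^ s * b ^ (1 - s) := by
        gcongr
        exacts [min_le_left a b, min_le_right a b]

lemma abs_rpow_sub_rpow_le_of_abs_sub_le {p ε a b : ℝ} (hp : 1 ≤ p) (ha : 0 ≤ a) (hb : 0 ≤ b)
    (hε : 0 ≤ ε) (habε : |a - b| ≤ ε) :
    |a ^ p - b ^ p| ≤ p * 2 ^ (p - 1) * (ε * b ^ (p - 1) + ε ^ (p - 1) * |a - b|) := by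
  have hq : 0 ≤ p - 1 := by linarith
  calc |a ^ p - b ^ p| ≤ p * (b + ε) ^ (p - 1) * |a - b| :=
        abs_rpow_sub_rpow_le_of_le hp ha hb (by linarith [le_abs_self (a - b)])
          (by linarith)
    _ ≤ p * (2 ^ (p - 1) * (b ^ (p - 1) + ε ^ (p - 1))) * |a - b| := by
        gcongr
        exact add_rpow_le_two_rpow_mul_add_rpow hq hb hε
    _ = p * 2 ^ (p - 1) * (b ^ (p - 1) * |a - b| + ε ^ (p - 1) * |a - b|) := by ring
    _ ≤ p * 2 ^ (p - 1) * (b ^ (p - 1) * ε + ε ^ (p - 1) * |a - b|) := by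
        gcongr
    _ = p * 2 ^ (p - 1) * (ε * b ^ (p - 1) + ε ^ (p - 1) * |a - b|) := by ring

end Real

section IntegralEstimates

variable {α : Type*} [MeasurableSpace α] {μ : Measure α} {f h : α → ℝ}

lemma integral_abs_sub_eq_two_mul_integral_max_sub (hf : Integrable f μ) (hh : Integrable h μ)
    (hfh : ∫ x, f x ∂μ = ∫ x, h x ∂μ) :
    ∫ x, |f x - h x| ∂μ = 2 * ∫ x, max (h x - f x) 0 ∂μ := by
  have habs : ∀ x, |f x - h x| = (f x - h x) + 2 * max (h x - f x) 0 := fun x => by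
    rcases le_total (f x) (h x) with hle | hle
    · rw [abs_of_nonpos (by linarith), max_eq_left (by linarith)]; ring
    · rw [abs_of_nonneg (by linarith), max_eq_right (by linarith)]; ring
  have hsub : Integrable (fun x => f x - h x) μ := hf.sub hh
  have hpos : Integrable (fun x => 2 * max (h x - f x) 0) μ := (hh.sub hf).pos_part.const_mul 2
  simp_rw [habs]
  rw [integral_add hsub hpos, integral_sub hf hh, hfh,
    sub_self, zero_add, integral_const_mul]

lemma integral_abs_sub_le_of_abs_sub_le {ε s : ℝ} (hf0 : ∀ x, 0 ≤ f x) (hh0 : ∀ x, 0 ≤ h x)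
    (hf : Integrable f μ) (hh : Integrable h μ) (hfh : ∫ x, f x ∂μ = ∫ x, h x ∂μ)
    (hε : 0 ≤ ε) (hfε : ∀ x, |f x - h x| ≤ ε) (hs0 : 0 ≤ s) (hs1 : s ≤ 1)
    (hhs : Integrable (fun x => h x ^ s) μ) :
    ∫ x, |f x - h x| ∂μ ≤ 2 * ε ^ (1 - s) * ∫ x, h x ^ s ∂μ := by
  have hpt : ∀ x, max (h x - f x) 0 ≤ h x ^ s * ε ^ (1 - s) := fun x => by
    refine le_trans ?_ (Real.min_le_rpow_mul_rpow (hh0 x) hε hs0 hs1)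
    refine max_le (le_min (by linarith [hf0 x]) ?_) (le_min (hh0 x) hε)
    linarith [neg_abs_le (f x - h x), hfε x]
  rw [integral_abs_sub_eq_two_mul_integral_max_sub hf hh hfh, mul_assoc, mul_comm (ε ^ _),
    ← integral_mul_const]
  gcongr
  exacts [(hh.sub hf).pos_part, hhs.mul_const _, hpt]

lemma abs_integral_rpow_sub_integral_rpow_le {p s ε : ℝ} (hp : 1 ≤ p) (hs0 : 0 ≤ s)
    (hs1 : s ≤ 1) (hsp : s ≤ p - 1) (hf0 : ∀ x, 0 ≤ f x) (hh0 : ∀ x, 0 ≤ h x)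
    (hf : Integrable f μ) (hh : Integrable h μ) (hfh : ∫ x, f x ∂μ = ∫ x, h x ∂μ)
    (hhp : Integrable (fun x => h x ^ p) μ) (hhp1 : Integrable (fun x => h x ^ (p - 1)) μ)
    (hhs : Integrable (fun x => h x ^ s) μ) (hε0 : 0 ≤ ε) (hε1 : ε ≤ 1)
    (hfε : ∀ x, |f x - h x| ≤ ε) :
    |∫ x, f x ^ p ∂μ - ∫ x, h x ^ p ∂μ|
      ≤ p * 2 ^ (p - 1) * (∫ x, h x ^ (p - 1) ∂μ + 2 * ∫ x, h x ^ s ∂μ) * ε := by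
  have hpt x := Real.abs_rpow_sub_rpow_le_of_abs_sub_le hp (hf0 x) (hh0 x) hε0 (hfε x)
  have hd : Integrable (fun x => |f x - h x|) μ := (hf.sub hh).abs
  have hG : Integrable (fun x => p * 2 ^ (p - 1) *
      (ε * h x ^ (p - 1) + ε ^ (p - 1) * |f x - h x|)) μ :=
    ((hhp1.const_mul ε).add (hd.const_mul _)).const_mul _
  have hfp : Integrable (fun x => f x ^ p) μ := by
    have hsub : Integrable (fun x => f x ^ p - h x ^ p) μ :=
      hG.mono' ((hf.aemeasurable.pow_const p).sub hhp.aemeasurable).aestronglyMeasurable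
        (ae_of_all _ fun x => (Real.norm_eq_abs _).trans_le (hpt x))
    exact (hsub.add hhp).congr (ae_of_all _ fun x => sub_add_cancel _ _)
  have hεpow : ε ^ (p - 1) * ε ^ (1 - s) ≤ ε := by
    rw [← Real.rpow_add' hε0 (by linarith)]
    simpa using Real.rpow_le_rpow_of_exponent_ge' hε0 hε1 zero_le_one (by linarith)
  have hB : 0 ≤ ∫ x, h x ^ s ∂μ := integral_nonneg fun x => Real.rpow_nonneg (hh0 x) s
  calc |∫ x, f x ^ p ∂μ - ∫ x, h x ^ p ∂μ| = |∫ x, (f x ^ p - h x ^ p) ∂μ| := by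
        rw [integral_sub hfp hhp]
    _ ≤ ∫ x, |f x ^ p - h x ^ p| ∂μ := abs_integral_le_integral_abs
    _ ≤ ∫ x, p * 2 ^ (p - 1) * (ε * h x ^ (p - 1) + ε ^ (p - 1) * |f x - h x|) ∂μ :=
        integral_mono (hfp.sub hhp).abs hG hpt
    _ = p * 2 ^ (p - 1) * (ε * ∫ x, h x ^ (p - 1) ∂μ + ε ^ (p - 1) * ∫ x, |f x - h x| ∂μ) := by
        rw [integral_const_mul, integral_add (hhp1.const_mul ε) (hd.const_mul _),
          integral_const_mul, integral_const_mul]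
    _ ≤ p * 2 ^ (p - 1) * (ε * ∫ x, h x ^ (p - 1) ∂μ
          + ε ^ (p - 1) * (2 * ε ^ (1 - s) * ∫ x, h x ^ s ∂μ)) := by
        gcongr
        exact integral_abs_sub_le_of_abs_sub_le hf0 hh0 hf hh hfh hε0 hfε hs0 hs1 hhs
    _ = p * 2 ^ (p - 1) * (ε * ∫ x, h x ^ (p - 1) ∂μ
          + 2 * (∫ x, h x ^ s ∂μ) * (ε ^ (p - 1) * ε ^ (1 - s))) := by ring
    _ ≤ p * 2 ^ (p - 1) * (ε * ∫ x, h x ^ (p - 1) ∂μ + 2 * (∫ x, h x ^ s ∂μ) * ε) := by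
        gcongr
    _ = p * 2 ^ (p - 1) * (∫ x, h x ^ (p - 1) ∂μ + 2 * ∫ x, h x ^ s ∂μ) * ε := by ring

end IntegralEstimates

section UniformConvergence

variable {ι α : Type*} {l : Filter ι} {F : ι → α → ℝ} {f : α → ℝ}

lemma TendstoUniformly.eventually_abs_sub_le_iSup (h : TendstoUniformly F f l) :
    ∀ᶠ n in l, ∀ x, |F n x - f x| ≤ ⨆ y, |F n y - f y| := by
  filter_upwards [Metric.tendstoUniformly_iff.1 h 1 one_pos] with n hn x
  refine le_ciSup (f := fun y => |F n y - f y|) ⟨1, ?_⟩ x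
  rintro _ ⟨y, rfl⟩
  exact (dist_comm (F n y) (f y)).trans_le (hn y).le

lemma TendstoUniformly.tendsto_iSup_abs_sub (h : TendstoUniformly F f l) :
    Tendsto (fun n => ⨆ x, |F n x - f x|) l (𝓝 0) := by
  rw [Metric.tendsto_nhds]
  intro δ hδ
  filter_upwards [Metric.tendstoUniformly_iff.1 h (δ / 2) (half_pos hδ)] with n hn
  rw [Real.dist_0_eq_abs, abs_of_nonneg (Real.iSup_nonneg fun x => abs_nonneg _)]
  refine (Real.iSup_le (fun x => ?_) (half_pos hδ).le).trans_lt (half_lt_self hδ)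
  exact (dist_comm (F n x) (f x)).trans_le (hn x).le

end UniformConvergence

lemma gumbelPDF_nonneg (x : ℝ) : 0 ≤ gumbelPDF x := (exp_pos _).le

lemma gumbelPDF_rpow (s x : ℝ) : gumbelPDF x ^ s = exp (s * (-x - exp (-x))) := by
  rw [gumbelPDF, ← exp_mul, mul_comm]

lemma integrable_gumbelPDF_rpow {s : ℝ} (hs : 0 < s) :
    Integrable (fun x => gumbelPDF x ^ s) := by
  have hcont : Continuous (fun x => gumbelPDF x ^ s) := by
    simp_rw [gumbelPDF_rpow]; fun_prop
  have hnorm x : ‖gumbelPDF x ^ s‖ = exp (s * (-x - exp (-x))) := by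
    rw [norm_of_nonneg (rpow_nonneg (gumbelPDF_nonneg x) s), gumbelPDF_rpow]
  rw [← integrableOn_univ, ← Iic_union_Ioi (a := (0 : ℝ))]
  refine IntegrableOn.union ?_ ?_
  · refine (integrableOn_exp_mul_Iic hs 0).mono' hcont.aestronglyMeasurable
      (ae_of_all _ fun x => ?_)
    rw [hnorm]
    gcongr
    linarith [two_mul_le_exp (x := -x)]
  · refine (integrableOn_exp_mul_Ioi (neg_neg_of_pos hs) 0).mono' hcont.aestronglyMeasurable
      (ae_of_all _ fun x => ?_)
    rw [hnorm]
    exact exp_le_exp.2 (by nlinarith [exp_pos (-x)])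

lemma integrable_gumbelPDF : Integrable gumbelPDF := by
  simpa using integrable_gumbelPDF_rpow one_pos

lemma integral_gumbelPDF : ∫ x, gumbelPDF x = 1 := by
  have hderiv x : HasDerivAt (fun y => exp (-exp (-y))) (gumbelPDF x) x := by
    convert (hasDerivAt_neg x).exp.neg.exp using 1
    · rfl
    · simp only [gumbelPDF, Pi.neg_apply, sub_eq_add_neg, exp_add]
      ring
  have hbot : Tendsto (fun y => exp (-exp (-y))) atBot (nhds 0) :=
    tendsto_exp_atBot.comp
      (tendsto_neg_atTop_atBot.comp (tendsto_exp_atTop.comp tendsto_neg_atBot_atTop))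
  have htop : Tendsto (fun y => exp (-exp (-y))) atTop (nhds 1) := by
    have h := (continuous_exp.tendsto (-0)).comp tendsto_exp_neg_atTop_nhds_zero.neg
    simpa [Function.comp_def] using h
  simpa using integral_of_hasDerivAt_of_tendsto hderiv integrable_gumbelPDF hbot htop

lemma integral_gumbelPDF_rpow_pos {s : ℝ} (hs : 0 < s) : 0 < ∫ x, gumbelPDF x ^ s := by
  have h := integrable_gumbelPDF_rpow hs
  simp_rw [gumbelPDF_rpow] at h ⊢
  exact integral_exp_pos h

lemma isBigO_integral_rpow_sub_integral_gumbelPDF_rpow {ι : Type*} {l : Filter ι} {p : ℝ}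
    (hp : 1 < p) {g : ι → ℝ → ℝ} (hdens : ∀ n, (∀ x, 0 ≤ g n x) ∧ ∫ x, g n x = 1)
    (hunif : TendstoUniformly g gumbelPDF l) :
    (fun n => (∫ x, g n x ^ p) - ∫ x, gumbelPDF x ^ p) =O[l]
      (fun n => ⨆ x, |g n x - gumbelPDF x|) := by
  set s := min 1 (p - 1)
  have hs : 0 < s := lt_min one_pos (by linarith)
  refine IsBigO.of_bound
    (p * 2 ^ (p - 1) * ((∫ x, gumbelPDF x ^ (p - 1)) + 2 * ∫ x, gumbelPDF x ^ s)) ?_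
  filter_upwards [hunif.eventually_abs_sub_le_iSup,
    hunif.tendsto_iSup_abs_sub.eventually (ge_mem_nhds one_pos)] with n hclose hsmall
  have hsup : 0 ≤ ⨆ x, |g n x - gumbelPDF x| := Real.iSup_nonneg fun x => abs_nonneg _
  have hg : Integrable (g n) := .of_integral_ne_zero (by simp [(hdens n).2])
  rw [Real.norm_eq_abs, Real.norm_of_nonneg hsup]
  exact abs_integral_rpow_sub_integral_rpow_le hp.le hs.le (min_le_left _ _) (min_le_right _ _)
    (hdens n).1 gumbelPDF_nonneg hg integrable_gumbelPDF
    (by rw [(hdens n).2, integral_gumbelPDF]) (integrable_gumbelPDF_rpow (by linarith))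
    (integrable_gumbelPDF_rpow (by linarith)) (integrable_gumbelPDF_rpow hs) hsup hsmall hclose

theorem stmt14_general (β : ℝ) (hβ : 1 < β) (g : ℕ → ℝ → ℝ)
    (hdens : ∀ n, (∀ x, 0 ≤ g n x) ∧ ∫ x : ℝ, g n x = 1)
    (hunif : TendstoUniformly g gumbelPDF atTop) :
    Tendsto (fun n => renyiEntropy β (g n)) atTop (nhds (renyiEntropy β gumbelPDF)) ∧
    ∃ K : ℝ, ∀ᶠ n in atTop,
      |renyiEntropy β (g n) - renyiEntropy β gumbelPDF| ≤
        K * ⨆ x : ℝ, |g n x - gumbelPDF x| := by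
  set E := fun n => ⨆ x, |g n x - gumbelPDF x|
  have hE : Tendsto E atTop (𝓝 0) := hunif.tendsto_iSup_abs_sub
  have hJ := isBigO_integral_rpow_sub_integral_gumbelPDF_rpow hβ hdens hunif
  have hI : 0 < ∫ x, gumbelPDF x ^ β := integral_gumbelPDF_rpow_pos (by linarith)
  have hJI : Tendsto (fun n => ∫ x, g n x ^ β) atTop (𝓝 (∫ x, gumbelPDF x ^ β)) :=
    tendsto_sub_nhds_zero_iff.1 (hJ.trans_tendsto hE)
  have hlog : (fun n => log (∫ x, g n x ^ β) - log (∫ x, gumbelPDF x ^ β)) =O[atTop]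
      (fun n => (∫ x, g n x ^ β) - ∫ x, gumbelPDF x ^ β) :=
    (hasDerivAt_log hI.ne').isBigO_sub.comp_tendsto hJI
  have hH : (fun n => renyiEntropy β (g n) - renyiEntropy β gumbelPDF) =O[atTop] E := by
    simp only [renyiEntropy, ← mul_sub]
    exact (hlog.trans hJ).const_mul_left _
  refine ⟨tendsto_sub_nhds_zero_iff.1 (hH.trans_tendsto hE), ?_⟩
  obtain ⟨K, hK⟩ := hH.bound
  refine ⟨K, hK.mono fun n hn => ?_⟩
  rwa [Real.norm_eq_abs, Real.norm_of_nonneg (Real.iSup_nonneg fun x => abs_nonneg _)] at hn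

theorem stmt14 (β M : ℝ) (hβ : 1 < β) (hM : 0 < M) (g : ℕ → ℝ → ℝ)
    (hdens : ∀ n, (∀ x, 0 ≤ g n x) ∧ ∫ x : ℝ, g n x = 1)
    (hunif : TendstoUniformly g gumbelPDF atTop)
    (hbound : ∀ᶠ n in atTop, (∫ x : ℝ, |g n x - gumbelPDF x| ^ (β - 1)) ≤ M) :
    Tendsto (fun n => renyiEntropy β (g n)) atTop (nhds (renyiEntropy β gumbelPDF)) ∧
    ∃ K : ℝ, ∀ᶠ n in atTop,
      |renyiEntropy β (g n) - renyiEntropy β gumbelPDF| ≤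
        K * ⨆ x : ℝ, |g n x - gumbelPDF x| :=
  stmt14_general β hβ g hdens hunif
end
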